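/- Let t > 0 and −π/3 < θ < π/3. Then for every product vector ξ⊗η ∈ ℂ³⊗ℂ³ of one of the following forms, one has Φ_θ(t)(ξξ*)·η̄ = 0 (where η̄ is the entrywise complex conjugate of η): (i) ξ = (a₁,a₂,a₃)ᵗ, η = (ā₁,ā₂,ā₃)ᵗ with |a₁| = |a₂| = |a₃|; (ii) ξ = (0, √t β, 1)ᵗ, η = (0, √t β̄, t e^{iθ})ᵗ with |β| = 1; (iii) ξ = (1, 0, √t β)ᵗ, η = (t e^{iθ}, 0, √t β̄)ᵗ with |β| = 1; (iv) ξ = (√t β, 1, 0)ᵗ, η = (√t β̄, t e^{iθ}, 0)ᵗ with |β| = 1. -/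

import Mathlib

open Complex Matrix

noncomputable def PhiMap (a b c θ : ℝ) (X : Matrix (Fin 3) (Fin 3) ℂ) :
    Matrix (Fin 3) (Fin 3) ℂ :=
  !![(a : ℂ) * X 0 0 + (b : ℂ) * X 1 1 + (c : ℂ) * X 2 2,
       -exp (θ * I) * X 0 1, -exp (-θ * I) * X 0 2;
     -exp (-θ * I) * X 1 0,
       (c : ℂ) * X 0 0 + (a : ℂ) * X 1 1 + (b : ℂ) * X 2 2, -exp (θ * I) * X 1 2;
     -exp (θ * I) * X 2 0, -exp (-θ * I) * X 2 1,
       (b : ℂ) * X 0 0 + (c : ℂ) * X 1 1 + (a : ℂ) * X 2 2]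

noncomputable def pTheta (θ : ℝ) : ℝ :=
  max (2 * Real.cos (θ + 2 * Real.pi / 3))
    (max (2 * Real.cos θ) (2 * Real.cos (θ - 2 * Real.pi / 3)))

noncomputable def PhiT (θ t : ℝ) : Matrix (Fin 3) (Fin 3) ℂ → Matrix (Fin 3) (Fin 3) ℂ :=
  PhiMap (1 - (pTheta θ - 1) * t / (1 - t + t ^ 2))
         ((pTheta θ - 1) * t ^ 2 / (1 - t + t ^ 2))
         ((pTheta θ - 1) / (1 - t + t ^ 2)) θ

/-!
For `|θ| ≤ π/3` the maximum defining `p_θ` is attained at `2 cos θ`, and the coefficients of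
`Φ_θ(t)` satisfy `a + b + c = p_θ`, `a t + b = t` and `c t + a = 1`. In family (i) `η̄ = ξ`,
and if `|ξᵢ|² = ρ` for all `i`, the `i`-th entry of `Φ(ξξ*) ξ` is
`ρ ξᵢ (a + b + c - e^{iθ} - e^{-iθ}) = 0`. For `ξ = (0, √t β, 1)` the two nonzero entries
are multiples of `a t + b - t` and `c t + a - 1`. Finally `Φ[a,b,c;θ]` commutes with the
cyclic shift of coordinates, and families (iii), (iv) are cyclic shifts of (ii).
-/

open Real in
theorem cos_le_cos_of_abs_le {x y : ℝ} (hy : |y| ≤ π) (hxy : |x| ≤ |y|) :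
    Real.cos y ≤ Real.cos x := by
  rw [← cos_abs x, ← cos_abs y]
  exact cos_le_cos_of_nonneg_of_le_pi (abs_nonneg x) hy hxy

open Real in
theorem pTheta_eq_two_mul_cos {θ : ℝ} (hθ : |θ| ≤ π / 3) : pTheta θ = 2 * Real.cos θ := by
  have hπ := pi_pos
  obtain ⟨hl, hr⟩ := abs_le.mp hθ
  have hcos_add : Real.cos (θ + 2 * π / 3) ≤ Real.cos θ := by
    apply cos_le_cos_of_abs_le <;> rw [abs_of_nonneg (by linarith : 0 ≤ θ + 2 * π / 3)] <;>
      linarith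
  have hcos_sub : Real.cos (θ - 2 * π / 3) ≤ Real.cos θ := by
    apply cos_le_cos_of_abs_le <;> rw [abs_of_nonpos (by linarith : θ - 2 * π / 3 ≤ 0)] <;>
      linarith
  rw [pTheta, max_eq_left (by linarith : 2 * Real.cos (θ - 2 * π / 3) ≤ 2 * Real.cos θ)]
  exact max_eq_right (by linarith)

def ProductInKernel {n : Type*} [Fintype n] (Φ : Matrix n n ℂ → Matrix n n ℂ) (ξ η : n → ℂ) :
    Prop :=
  Φ (vecMulVec ξ (star ξ)) *ᵥ star η = 0

theorem vecCons_three_comp_finRotate {α : Type*} (x y z : α) :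
    ![x, y, z] ∘ finRotate 3 = ![y, z, x] := by
  ext i; fin_cases i <;> rfl

section PhiMap

variable {a b c θ : ℝ}

theorem phiMap_submatrix_finRotate (X : Matrix (Fin 3) (Fin 3) ℂ) :
    PhiMap a b c θ (X.submatrix (finRotate 3) (finRotate 3)) =
      (PhiMap a b c θ X).submatrix (finRotate 3) (finRotate 3) := by
  ext i j
  fin_cases i <;> fin_cases j <;> simp [PhiMap] <;> ring

theorem ProductInKernel.comp_finRotate {ξ η : Fin 3 → ℂ}
    (h : ProductInKernel (PhiMap a b c θ) ξ η) :
    ProductInKernel (PhiMap a b c θ) (ξ ∘ finRotate 3) (η ∘ finRotate 3) := by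
  have hX : vecMulVec (ξ ∘ finRotate 3) (star (ξ ∘ finRotate 3)) =
      (vecMulVec ξ (star ξ)).submatrix (finRotate 3) (finRotate 3) := rfl
  unfold ProductInKernel
  rw [hX, phiMap_submatrix_finRotate, submatrix_mulVec_equiv]
  have hη : star (η ∘ finRotate 3) ∘ (finRotate 3).symm = star η := by
    ext i; simp
  rw [hη, h]
  rfl

theorem productInKernel_phiMap_of_norm_eq (habc : a + b + c = 2 * Real.cos θ)
    {a₁ a₂ a₃ : ℂ} (h₁₂ : ‖a₁‖ = ‖a₂‖) (h₂₃ : ‖a₂‖ = ‖a₃‖) :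
    ProductInKernel (PhiMap a b c θ) ![a₁, a₂, a₃]
      ![starRingEnd ℂ a₁, starRingEnd ℂ a₂, starRingEnd ℂ a₃] := by
  have hE : cexp (θ * I) + cexp (-(θ * I)) = a + b + c := by
    rw [← neg_mul, ← two_cos, ← ofReal_cos]
    exact_mod_cast habc.symm
  have n₂ : a₂ * starRingEnd ℂ a₂ = a₁ * starRingEnd ℂ a₁ := by
    rw [mul_conj, mul_conj, normSq_eq_norm_sq, normSq_eq_norm_sq, h₁₂]
  have n₃ : a₃ * starRingEnd ℂ a₃ = a₁ * starRingEnd ℂ a₁ := by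
    rw [mul_conj, mul_conj, normSq_eq_norm_sq, normSq_eq_norm_sq, h₁₂, h₂₃]
  set ρ := a₁ * starRingEnd ℂ a₁
  unfold ProductInKernel
  ext i
  fin_cases i <;> simp [PhiMap, vecMulVec, mulVec, dotProduct, Fin.sum_univ_three]
  · linear_combination (b - cexp (θ * I)) * a₁ * n₂ + (c - cexp (-(θ * I))) * a₁ * n₃ - a₁ * ρ * hE
  · linear_combination a * a₂ * n₂ + (b - cexp (θ * I)) * a₂ * n₃ - a₂ * ρ * hE
  · linear_combination (c - cexp (-(θ * I))) * a₃ * n₂ + a * a₃ * n₃ - a₃ * ρ * hE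

theorem productInKernel_phiMap_zero_sqrt_one {t s : ℝ} (hs : s ^ 2 = t) (hab : a * t + b = t)
    (hca : c * t + a = 1) {β : ℂ} (hβ : ‖β‖ = 1) :
    ProductInKernel (PhiMap a b c θ) ![0, (s : ℂ) * β, 1]
      ![0, (s : ℂ) * starRingEnd ℂ β, (t : ℂ) * exp (θ * I)] := by
  have hab' : (a : ℂ) * t + b = t := by exact_mod_cast hab
  have hca' : (c : ℂ) * t + a = 1 := by exact_mod_cast hca
  have hsβ : (s : ℂ) * β * (s * starRingEnd ℂ β) = t := by
    have hs' : (s : ℂ) ^ 2 = t := by exact_mod_cast hs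
    have hβ' : β * starRingEnd ℂ β = 1 := by
      rw [mul_conj, normSq_eq_norm_sq, hβ]; norm_num
    linear_combination β * starRingEnd ℂ β * hs' + t * hβ'
  have hE : cexp (θ * I) * cexp (-(θ * I)) = 1 := by
    rw [← Complex.exp_add, add_neg_cancel, Complex.exp_zero]
  unfold ProductInKernel
  ext i
  fin_cases i <;> simp [PhiMap, vecMulVec, mulVec, dotProduct, Fin.sum_univ_three, ← exp_conj]
  · linear_combination a * s * β * hsβ + s * β * hab' - t * s * β * hE
  · linear_combination (c * t - 1) * cexp (-(θ * I)) * hsβ + t * cexp (-(θ * I)) * hca'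

end PhiMap

theorem product_vectors_in_kernel (t θ : ℝ) (ht : 0 < t)
    (hθl : -(Real.pi / 3) < θ) (hθr : θ < Real.pi / 3) :
    (∀ a₁ a₂ a₃ : ℂ, ‖a₁‖ = ‖a₂‖ → ‖a₂‖ = ‖a₃‖ →
      PhiT θ t (vecMulVec (![a₁, a₂, a₃]) (star (![a₁, a₂, a₃] : Fin 3 → ℂ))) *ᵥ
        star (![starRingEnd ℂ a₁, starRingEnd ℂ a₂, starRingEnd ℂ a₃] : Fin 3 → ℂ) = 0) ∧
    (∀ β : ℂ, ‖β‖ = 1 →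
      PhiT θ t (vecMulVec (![0, (Real.sqrt t : ℂ) * β, 1])
          (star (![0, (Real.sqrt t : ℂ) * β, 1] : Fin 3 → ℂ))) *ᵥ
        star (![0, (Real.sqrt t : ℂ) * starRingEnd ℂ β, (t : ℂ) * exp (θ * I)] : Fin 3 → ℂ)
        = 0) ∧
    (∀ β : ℂ, ‖β‖ = 1 →
      PhiT θ t (vecMulVec (![1, 0, (Real.sqrt t : ℂ) * β])
          (star (![1, 0, (Real.sqrt t : ℂ) * β] : Fin 3 → ℂ))) *ᵥ
        star (![(t : ℂ) * exp (θ * I), 0, (Real.sqrt t : ℂ) * starRingEnd ℂ β] : Fin 3 → ℂ)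
        = 0) ∧
    (∀ β : ℂ, ‖β‖ = 1 →
      PhiT θ t (vecMulVec (![(Real.sqrt t : ℂ) * β, 1, 0])
          (star (![(Real.sqrt t : ℂ) * β, 1, 0] : Fin 3 → ℂ))) *ᵥ
        star (![(Real.sqrt t : ℂ) * starRingEnd ℂ β, (t : ℂ) * exp (θ * I), 0] : Fin 3 → ℂ)
        = 0) := by
  have hsum : (1 - (pTheta θ - 1) * t / (1 - t + t ^ 2)) + (pTheta θ - 1) * t ^ 2 / (1 - t + t ^ 2)
      + (pTheta θ - 1) / (1 - t + t ^ 2) = 2 * Real.cos θ := by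
    have hD : 1 - t + t ^ 2 ≠ 0 := by nlinarith [sq_nonneg (t - 1 / 2)]
    rw [← pTheta_eq_two_mul_cos (abs_le.mpr ⟨hθl.le, hθr.le⟩)]
    field_simp
    ring
  have base (β : ℂ) (hβ : ‖β‖ = 1) : ProductInKernel (PhiT θ t) ![0, (Real.sqrt t : ℂ) * β, 1]
      ![0, (Real.sqrt t : ℂ) * starRingEnd ℂ β, (t : ℂ) * exp (θ * I)] :=
    productInKernel_phiMap_zero_sqrt_one (Real.sq_sqrt ht.le) (by ring) (by ring) hβ
  refine ⟨fun _ _ _ => productInKernel_phiMap_of_norm_eq hsum, base, fun β hβ => ?_,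
    fun β hβ => ?_⟩
  · have h := (base β hβ).comp_finRotate.comp_finRotate
    simp only [vecCons_three_comp_finRotate] at h
    exact h
  · have h := (base β hβ).comp_finRotate
    simp only [vecCons_three_comp_finRotate] at h
    exact h
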